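/- The trace transfer matrix of the inhomogeneous fundamental gl(M|N) chain is gl(M)⊕gl(N) invariant: for all 1 ≤ a, b ≤ n with [a] = [b] and all u ∈ ℂ, [Δ(E_{ab}), t(u)] = 0 in End(H). -/

import Mathlib

open scoped BigOperators

noncomputable section

namespace SuperSpin

/-- The ℤ₂-grading on `Fin n` (0-indexed): grade `0` for the first `M` indices,
grade `1` for the remaining ones.  `gr M i` is the grade of the (paper, 1-indexed)
index `i+1`. -/
def gr (M : ℕ) {n : ℕ} (i : Fin n) : ℕ := if (i : ℕ) < M then 0 else 1

/-- `End(V ⊗ V)` for `V = ℂⁿ`, as matrices indexed by pairs. -/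
abbrev E2 (n : ℕ) := Matrix (Fin n × Fin n) (Fin n × Fin n) ℂ

/-- The graded permutation operator `P (e_c ⊗ e_d) = (-1)^{[c][d]} e_d ⊗ e_c`. -/
def Pm (M n : ℕ) : E2 n :=
  Matrix.of fun p q =>
    if p.1 = q.2 ∧ p.2 = q.1 then ((-1 : ℂ) ^ (gr M q.1 * gr M q.2)) else 0

/-- The R-matrix `R(u) = u·id - hb·P`. -/
def Rm (M n : ℕ) (hb u : ℂ) : E2 n := u • (1 : E2 n) - hb • Pm M n

/-- The operator `Q (e_c ⊗ e_d) = δ_{cd} (-1)^{[d]} ∑_a e_a ⊗ e_a`. -/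
def Qm (M n : ℕ) : E2 n :=
  Matrix.of fun p q => if q.1 = q.2 ∧ p.1 = p.2 then ((-1 : ℂ) ^ (gr M q.2)) else 0

/-- Graded partial transposition in the second tensor factor. -/
def pt2 (M n : ℕ) (X : E2 n) : E2 n :=
  Matrix.of fun p q =>
    ((-1 : ℂ) ^ (gr M p.2 * gr M q.2 + gr M q.2)) * X (p.1, q.2) (q.1, p.2)

/-- Graded transposition of an `n × n` matrix: `(Aᵗ)_{ij} = (-1)^{[i][j]+[j]} A_{ji}`. -/
def gTr (M : ℕ) {n : ℕ} (A : Matrix (Fin n) (Fin n) ℂ) : Matrix (Fin n) (Fin n) ℂ :=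
  Matrix.of fun i j => ((-1 : ℂ) ^ (gr M i * gr M j + gr M j)) * A j i

/-- `A ⊗ id` acting on `V ⊗ V`. -/
def m1 {n : ℕ} (A : Matrix (Fin n) (Fin n) ℂ) : E2 n :=
  Matrix.of fun p q => A p.1 q.1 * (if p.2 = q.2 then 1 else 0)

/-- `id ⊗ A` acting on `V ⊗ V`. -/
def m2 {n : ℕ} (A : Matrix (Fin n) (Fin n) ℂ) : E2 n :=
  Matrix.of fun p q => (if p.1 = q.1 then 1 else 0) * A p.2 q.2

/-- `R₂₁(x) = P ∘ R(x) ∘ P`. -/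
def R21 (M n : ℕ) (hb u : ℂ) : E2 n := Pm M n * Rm M n hb u * Pm M n

/-- The graded reflection equation for a matrix-valued function `K`. -/
def GRE (M n : ℕ) (hb : ℂ) (K : ℂ → Matrix (Fin n) (Fin n) ℂ) : Prop :=
  ∀ u v : ℂ,
    Rm M n hb (u - v) * m1 (K u) * R21 M n hb (u + v) * m2 (K v)
      = m2 (K v) * Rm M n hb (u + v) * m1 (K u) * R21 M n hb (u - v)

/-- `End(V^{⊗m})`, with basis indexed by functions `Fin m → Fin n`. -/
abbrev Ten (n m : ℕ) := Matrix (Fin m → Fin n) (Fin m → Fin n) ℂ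

/-- The Koszul embedding of `X ∈ End(V ⊗ V)` acting on the factors `i < j` of
`V^{⊗ m}` (identity on the other factors, with the graded crossing signs produced
by conjugation with the adjacent graded permutation operators). -/
def kEmb (M n m : ℕ) (i j : Fin m) (X : E2 n) : Ten n m :=
  Matrix.of fun f g =>
    (if ∀ l, l ≠ i → l ≠ j → f l = g l then (1 : ℂ) else 0)
      * X (f i, f j) (g i, g j)
      * (-1 : ℂ) ^ ((gr M (f j) + gr M (g j)) *
          ∑ l ∈ Finset.univ.filter (fun l => i < l ∧ l < j), gr M (g l))

/-- The monodromy matrix `𝒯(u) = R_{1,2}(u-a₁) ⋯ R_{1,L+1}(u-a_L)` of the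
inhomogeneous fundamental chain, acting on `V ⊗ H = V^{⊗(L+1)}` (auxiliary space
in position `0`). -/
def Tmono (M n L : ℕ) (hb : ℂ) (a : Fin L → ℂ) (u : ℂ) : Ten n (L + 1) :=
  (List.ofFn fun k : Fin L => kEmb M n (L + 1) 0 k.succ (Rm M n hb (u - a k))).prod

/-- The block entry `X_{ab} ∈ End(H)` of an operator `X` on `V ⊗ H`. -/
def blk {n L : ℕ} (X : Ten n (L + 1)) (a b : Fin n) : Ten n L :=
  Matrix.of fun f g => X (Fin.cons a f) (Fin.cons b g)

/-- Supertrace transfer matrix `st(u) = ∑ (-1)^{[a]} 𝒯_{aa}(u)`. -/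
def stm (M n L : ℕ) (hb : ℂ) (a : Fin L → ℂ) (u : ℂ) : Ten n L :=
  ∑ i : Fin n, ((-1 : ℂ) ^ gr M i) • blk (Tmono M n L hb a u) i i

/-- Trace transfer matrix `t(u) = ∑ 𝒯_{aa}(u)`. -/
def tm (M n L : ℕ) (hb : ℂ) (a : Fin L → ℂ) (u : ℂ) : Ten n L :=
  ∑ i : Fin n, blk (Tmono M n L hb a u) i i

/-- The pseudovacuum `v⁺ = e₁ ⊗ ⋯ ⊗ e₁`. -/
def vplus (n L : ℕ) : (Fin L → Fin n) → ℂ :=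
  fun f => if ∀ l, (f l : ℕ) = 0 then 1 else 0

/-- The pseudovacuum weights `λ_j(w)` (paper index `j ≥ 1`):
`λ₁(w) = ∏ (w - a_m - hb)`, `λ_j(w) = ∏ (w - a_m)` for `j ≥ 2`. -/
def lamP (L : ℕ) (hb : ℂ) (a : Fin L → ℂ) (j : ℕ) (w : ℂ) : ℂ :=
  if j = 1 then ∏ m, (w - a m - hb) else ∏ m, (w - a m)

/-- `c_m = ∑_{l=1}^m (-1)^{[l]}` (so `c_0 = 0`). -/
def cP (M : ℕ) (m : ℕ) : ℂ := ∑ l ∈ Finset.range m, (if l < M then (1 : ℂ) else -1)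

/-- `λ'_k(w) = ∏_{m=1}^{k-1} λ_m(w + hb c_m) / ∏_{m=1}^{k} λ_m(w + hb c_{m-1})`
(paper index `k ≥ 1`). -/
def lamPr (M L : ℕ) (hb : ℂ) (a : Fin L → ℂ) (k : ℕ) (w : ℂ) : ℂ :=
  (∏ m ∈ Finset.Icc 1 (k - 1), lamP L hb a m (w + hb * cP M m)) /
    (∏ m ∈ Finset.Icc 1 k, lamP L hb a m (w + hb * cP M (m - 1)))

/-- The global generators `Δ(E_{ab}) = ∑_k E_{ab}^{(k)}` on `H = V^{⊗L}`. -/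
def Delta (M n L : ℕ) (a b : Fin n) : Ten n L :=
  ∑ k : Fin L, Matrix.of fun f g =>
    if f k = a ∧ g k = b ∧ ∀ l, l ≠ k → f l = g l then
      (-1 : ℂ) ^ ((gr M a + gr M b) *
        ∑ l ∈ Finset.univ.filter (fun l => l < k), gr M (g l))
    else 0

/-- The diagonal entry (at paper index `j`, `1 ≤ j ≤ n`) of the diagonal boundary
matrix with parameter `ξ` and blocks determined by `L₁ ≤ L₂`. -/
def kdval (ξ : ℂ) (L₁ L₂ : ℕ) (j : ℕ) (u : ℂ) : ℂ :=
  if L₁ < j ∧ j ≤ L₂ then u + ξ else ξ - u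

/-- The diagonal boundary matrix `K(u)`. -/
def Kdiag (n : ℕ) (ξ : ℂ) (L₁ L₂ : ℕ) (u : ℂ) : Matrix (Fin n) (Fin n) ℂ :=
  Matrix.diagonal fun j => kdval ξ L₁ L₂ ((j : ℕ) + 1) u

/-- An `n × n` matrix acting on the auxiliary (first) factor of `V^{⊗(L+1)}`. -/
def onAux {n L : ℕ} (A : Matrix (Fin n) (Fin n) ℂ) : Ten n (L + 1) :=
  Matrix.of fun f g => A (f 0) (g 0) * (if ∀ l, l ≠ 0 → f l = g l then 1 else 0)

/-- The double-row monodromy matrix `ℬ(u) = 𝒯(u) (K(u) ⊗ id_H) 𝒯(-u)⁻¹`. -/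
def Bmono (M n L : ℕ) (hb : ℂ) (a : Fin L → ℂ) (ξ : ℂ) (L₁ L₂ : ℕ) (u : ℂ) :
    Ten n (L + 1) :=
  Tmono M n L hb a u * onAux (Kdiag n ξ L₁ L₂ u) * (Tmono M n L hb a (-u))⁻¹

/-- The open-chain transfer matrix `b(u) = ∑ (-1)^{[a]} K⁺_{aa}(u) ℬ_{aa}(u)`. -/
def bop (M n L : ℕ) (hb : ℂ) (a : Fin L → ℂ) (ξ : ℂ) (L₁ L₂ : ℕ)
    (ξ' : ℂ) (L₁' L₂' : ℕ) (u : ℂ) : Ten n L :=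
  ∑ i : Fin n,
    (((-1 : ℂ) ^ gr M i) * Kdiag n ξ' L₁' L₂' u i i) •
      blk (Bmono M n L hb a ξ L₁ L₂ u) i i

/-- The functions `g_k(u)` of the open-chain pseudovacuum (paper index `k ≥ 1`). -/
def gP (M : ℕ) (hb ξ : ℂ) (L₁ L₂ : ℕ) (k : ℕ) (u : ℂ) : ℂ :=
  if k ≤ L₁ then ξ - u
  else if k ≤ L₂ then ξ + u - hb * cP M L₁
  else ξ - u - hb * (cP M L₁ - cP M L₂)

/-- The functions `a_k(u)` of the open-chain pseudovacuum (paper index `k ≥ 1`). -/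
def aP (M L : ℕ) (hb : ℂ) (a : Fin L → ℂ) (k : ℕ) (u : ℂ) : ℂ :=
  (if k ≤ M then (1 : ℂ) else -1) * hb *
    (2 * u * lamP L hb a k u * lamPr M L hb a k (-u)) /
    ((2 * u - hb * cP M k) * (2 * u - hb * cP M (k - 1)))

/-!
The full generator `∑ₖ E_{ab}^{(k)}` on `V ⊗ H` (sites `0, …, L`) commutes with every Koszul-embedded
graded permutation `P_{0j}`: conjugation by `P_{0j}` only exchanges the generators at sites `0` and
`j`, and for `[a] = [b]` all Koszul signs cancel. Hence it commutes with each `R_{0j}` and with the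
monodromy matrix `𝒯(u)`. Taking the trace over the auxiliary site `0`, the site-`0` term drops out
because `tr₀ (E^{(0)} X) = X_{ba} = tr₀ (X E^{(0)})`, which leaves `[Δ(E_{ab}), t(u)] = 0`.
-/

theorem apply_eq_and_eq_update_comm {α β : Type*} [DecidableEq α] {f g : α → β} {k : α}
    {a b : β} :
    (f k = a ∧ g = Function.update f k b) ↔ (g k = b ∧ f = Function.update g k a) := by
  constructor <;>
  · rintro ⟨rfl, rfl⟩
    simp

/-- `E_{ab}^{(k)}` without its Koszul sign, which is trivial when `[a] = [b]`. -/
def siteE {n m : ℕ} (a b : Fin n) (k : Fin m) : Ten n m :=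
  Matrix.of fun f g => if f k = a ∧ g = Function.update f k b then 1 else 0

def globalE {n m : ℕ} (a b : Fin n) : Ten n m := ∑ k : Fin m, siteE a b k

def koszulSign (M : ℕ) {n m : ℕ} (i j : Fin m) (g : Fin m → Fin n) : ℂ :=
  (-1) ^ (gr M (g i) * gr M (g j) +
    (gr M (g i) + gr M (g j)) * ∑ l ∈ Finset.univ.filter (fun l => i < l ∧ l < j), gr M (g l))

section Generators

variable {M n m : ℕ}

theorem neg_one_pow_add_self_mul (x s : ℕ) : (-1 : ℂ) ^ ((x + x) * s) = 1 :=
  (Even.mul_right ⟨x, rfl⟩ s).neg_one_pow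

theorem siteE_mul_apply (a b : Fin n) (k : Fin m) (X : Ten n m) (f g : Fin m → Fin n) :
    (siteE a b k * X) f g = if f k = a then X (Function.update f k b) g else 0 := by
  simp [siteE, Matrix.mul_apply, ite_and]

theorem mul_siteE_apply (a b : Fin n) (k : Fin m) (X : Ten n m) (f g : Fin m → Fin n) :
    (X * siteE a b k) f g = if g k = b then X f (Function.update g k a) else 0 := by
  simp [siteE, Matrix.mul_apply, apply_eq_and_eq_update_comm, ite_and]

theorem delta_eq_globalE {a b : Fin n} (hab : gr M a = gr M b) :
    Delta M n m a b = globalE a b := by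
  refine Finset.sum_congr rfl fun k _ => ?_
  ext f g
  simp only [siteE, Matrix.of_apply, Function.eq_update_iff, hab, neg_one_pow_add_self_mul]
  congr 1
  grind

end Generators

section KoszulEmbedding

variable {M n m : ℕ}

theorem eq_comp_swap_iff {f g : Fin m → Fin n} {i j : Fin m} :
    ((∀ l, l ≠ i → l ≠ j → f l = g l) ∧ f i = g j ∧ f j = g i) ↔ f = g ∘ Equiv.swap i j := by
  refine ⟨fun ⟨hoff, hi, hj⟩ => funext fun l => ?_, ?_⟩
  · rcases eq_or_ne l i with rfl | hli
    · simp [hi]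
    rcases eq_or_ne l j with rfl | hlj
    · simp [hj]
    simp [Equiv.swap_apply_of_ne_of_ne hli hlj, hoff l hli hlj]
  · rintro rfl
    exact ⟨fun l hli hlj => by simp [Equiv.swap_apply_of_ne_of_ne hli hlj], by simp, by simp⟩

theorem kEmb_Pm_apply (i j : Fin m) (f g : Fin m → Fin n) :
    kEmb M n m i j (Pm M n) f g = if f = g ∘ Equiv.swap i j then koszulSign M i j g else 0 := by
  simp only [← eq_comp_swap_iff, kEmb, Pm, koszulSign, Matrix.of_apply]
  split_ifs <;> simp_all [pow_add]

theorem kEmb_one (i j : Fin m) : kEmb M n m i j (1 : E2 n) = 1 := by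
  ext f g
  simp only [kEmb, Matrix.of_apply, Matrix.one_apply, Prod.mk.injEq]
  by_cases hfg : f = g
  · subst hfg
    simp
  · have : ¬((∀ l, l ≠ i → l ≠ j → f l = g l) ∧ f i = g i ∧ f j = g j) := fun ⟨hoff, hi, hj⟩ =>
      hfg <| funext fun l => by
        rcases eq_or_ne l i with rfl | hli
        · exact hi
        rcases eq_or_ne l j with rfl | hlj
        · exact hj
        exact hoff l hli hlj
    grind

theorem kEmb_Rm (i j : Fin m) (hb u : ℂ) :
    kEmb M n m i j (Rm M n hb u) = u • kEmb M n m i j 1 - hb • kEmb M n m i j (Pm M n) := by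
  ext f g
  simp only [kEmb, Rm, Matrix.sub_apply, Matrix.smul_apply, Matrix.of_apply, smul_eq_mul]
  ring

theorem koszulSign_update (i j k : Fin m) {g : Fin m → Fin n} {x : Fin n}
    (hx : gr M x = gr M (g k)) : koszulSign M i j (Function.update g k x) = koszulSign M i j g := by
  have hgr : ∀ l, gr M (Function.update g k x l) = gr M (g l) := fun l => by
    rcases eq_or_ne l k with rfl | hlk
    · simpa using hx
    · simp [hlk]
  simp only [koszulSign, hgr]

theorem siteE_mul_kEmb_Pm {a b : Fin n} (hab : gr M a = gr M b) (i j k : Fin m) :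
    siteE a b k * kEmb M n m i j (Pm M n)
      = kEmb M n m i j (Pm M n) * siteE a b (Equiv.swap i j k) := by
  ext f g
  rw [siteE_mul_apply, mul_siteE_apply, kEmb_Pm_apply, kEmb_Pm_apply, Function.update_comp_equiv]
  have hcond := apply_eq_and_eq_update_comm (f := f) (g := g ∘ Equiv.swap i j) (k := k)
    (a := a) (b := b)
  split_ifs <;> simp_all [eq_comm, koszulSign_update]

end KoszulEmbedding

section Commutation

variable {M n m : ℕ} {a b : Fin n}

theorem commute_globalE_kEmb_Pm (hab : gr M a = gr M b) (i j : Fin m) :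
    Commute (globalE a b) (kEmb M n m i j (Pm M n)) := by
  rw [Commute, SemiconjBy, globalE, Finset.sum_mul, Finset.mul_sum]
  simp_rw [siteE_mul_kEmb_Pm hab i j]
  exact Equiv.sum_comp (Equiv.swap i j) fun k => kEmb M n m i j (Pm M n) * siteE a b k

theorem commute_globalE_kEmb_Rm (hab : gr M a = gr M b) (i j : Fin m) (hb u : ℂ) :
    Commute (globalE a b) (kEmb M n m i j (Rm M n hb u)) := by
  rw [kEmb_Rm, kEmb_one]
  exact ((Commute.one_right _).smul_right u).sub_right
    ((commute_globalE_kEmb_Pm hab i j).smul_right hb)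

theorem commute_globalE_tmono {L : ℕ} (hab : gr M a = gr M b) (hb : ℂ) (sh : Fin L → ℂ) (u : ℂ) :
    Commute (globalE a b) (Tmono M n L hb sh u) :=
  Commute.list_prod_right _ _ fun _ hx => by
    obtain ⟨k, rfl⟩ := List.mem_ofFn.mp hx
    exact commute_globalE_kEmb_Rm hab 0 k.succ hb (u - sh k)

end Commutation

def auxTrace {n L : ℕ} : Ten n (L + 1) →+ Ten n L where
  toFun X := ∑ c, blk X c c
  map_zero' := Finset.sum_eq_zero fun _ _ => rfl
  map_add' X Y := by rw [← Finset.sum_add_distrib]; rfl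

theorem auxTrace_apply {n L : ℕ} (X : Ten n (L + 1)) : auxTrace X = ∑ c, blk X c c := rfl

section AuxTrace

variable {n L : ℕ} (a b : Fin n)

theorem blk_siteE_succ_mul (k : Fin L) (X : Ten n (L + 1)) (c d : Fin n) :
    blk (siteE a b k.succ * X) c d = siteE a b k * blk X c d := by
  ext f g
  simp only [blk, Matrix.of_apply, siteE_mul_apply, Fin.cons_succ, Fin.cons_update]

theorem blk_mul_siteE_succ (k : Fin L) (X : Ten n (L + 1)) (c d : Fin n) :
    blk (X * siteE a b k.succ) c d = blk X c d * siteE a b k := by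
  ext f g
  simp only [blk, Matrix.of_apply, mul_siteE_apply, Fin.cons_succ, Fin.cons_update]

theorem auxTrace_siteE_zero_mul (X : Ten n (L + 1)) :
    auxTrace (siteE a b 0 * X) = blk X b a := by
  ext f g
  simp [auxTrace, blk, Matrix.sum_apply, siteE_mul_apply, Fin.update_cons_zero]

theorem auxTrace_mul_siteE_zero (X : Ten n (L + 1)) :
    auxTrace (X * siteE a b 0) = blk X b a := by
  ext f g
  simp [auxTrace, blk, Matrix.sum_apply, mul_siteE_apply, Fin.update_cons_zero]

theorem siteE_mul_auxTrace (k : Fin L) (X : Ten n (L + 1)) :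
    siteE a b k * auxTrace X = auxTrace (siteE a b k.succ * X) := by
  simp only [auxTrace_apply, Finset.mul_sum, blk_siteE_succ_mul]

theorem auxTrace_mul_siteE (k : Fin L) (X : Ten n (L + 1)) :
    auxTrace X * siteE a b k = auxTrace (X * siteE a b k.succ) := by
  simp only [auxTrace_apply, Finset.sum_mul, blk_mul_siteE_succ]

theorem commute_globalE_auxTrace {X : Ten n (L + 1)} (hX : Commute (globalE a b) X) :
    Commute (globalE a b) (auxTrace X) := by
  set S := ∑ k : Fin L, siteE a b k.succ
  have hS : S * X = X * S + (X * siteE a b 0 - siteE a b 0 * X) := by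
    have := hX.eq
    rw [globalE, Fin.sum_univ_succ, add_mul, mul_add] at this
    rw [← sub_eq_zero] at this ⊢
    rw [← this]
    abel
  calc globalE a b * auxTrace X = auxTrace (S * X) := by
        simp only [globalE, Finset.sum_mul, siteE_mul_auxTrace, map_sum, S]
    _ = auxTrace (X * S) := by
        rw [hS, map_add, map_sub, auxTrace_mul_siteE_zero, auxTrace_siteE_zero_mul, sub_self,
          add_zero]
    _ = auxTrace X * globalE a b := by
        simp only [globalE, Finset.mul_sum, auxTrace_mul_siteE, map_sum, S]

end AuxTrace

theorem statement9_general (M N : ℕ) (hb : ℂ) (L : ℕ) (sh : Fin L → ℂ) :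
    ∀ a b : Fin (M + N), gr M a = gr M b → ∀ u : ℂ,
      Delta M (M + N) L a b * tm M (M + N) L hb sh u
        = tm M (M + N) L hb sh u * Delta M (M + N) L a b := by
  intro a b hab u
  rw [delta_eq_globalE hab]
  exact commute_globalE_auxTrace a b (commute_globalE_tmono hab hb sh u)

/-- The trace transfer matrix is `gl(M) ⊕ gl(N)` invariant:
`[Δ(E_{ab}), t(u)] = 0` whenever `[a] = [b]`. -/
theorem statement9 (M N : ℕ) (hM : 1 ≤ M) (hN : 1 ≤ N) (hb : ℂ) (hhb : hb ≠ 0)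
    (L : ℕ) (hL : 1 ≤ L) (sh : Fin L → ℂ) :
    ∀ a b : Fin (M + N), gr M a = gr M b → ∀ u : ℂ,
      Delta M (M + N) L a b * tm M (M + N) L hb sh u
        = tm M (M + N) L hb sh u * Delta M (M + N) L a b :=
  statement9_general M N hb L sh

end SuperSpin
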